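/- Let X be a real Banach space, Y a real Hilbert space, p ≥ 2, σ > 0, and let θ : X → ℝ be p-convex with constant σ. Let x0 ∈ X, ρ > 0, and let F : X → Y be Fréchet differentiable on B_{2ρ}(x0) satisfying the tangential cone condition with constant η ∈ [0,1). Let x̂ ∈ B_{2ρ}(x0) with F(x̂) = y, let ‖y^δ − y‖ ≤ δ, and let τ > 1, μ0 > 0. Suppose x ∈ B_{2ρ}(x0), ξ ∈ ∂θ(x), ‖F(x) − y^δ‖ ≥ τ δ, and set g := F'(x)*(F(x) − y^δ) ∈ X*. Let t ≥ 0 satisfy t ‖g‖^p ≤ μ0 ‖F(x) − y^δ‖^{2(p−1)}, let ξ' := ξ − t g, and let x' be a minimizer of z ↦ θ(z) − ⟨ξ', z⟩ over X. Then D_{ξ'}θ(x̂, x') ≤ D_ξθ(x̂, x) − c0 t ‖F(x) − y^δ‖², where c0 := 1 − η − (1 + η)/τ − ((p−1)/p) (μ0/(2σ))^{1/(p−1)}. -/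

import Mathlib

/-
The descent comes from the three-point identity for Bregman distances,
`D_{ξ - t g}(x̂, x') = D_ξ(x̂, x) - D_ξ(x', x) + t g(x̂ - x) + t g(x - x')`.
The tangential cone condition and the discrepancy principle `τ δ ≤ ‖F x - yδ‖` bound
`g(x̂ - x) ≤ -(1 - η - (1 + η)/τ) ‖F x - yδ‖²`, while `p`-convexity gives
`D_ξ(x', x) ≥ σ ‖x' - x‖ᵖ`, which absorbs `t g(x - x') ≤ t ‖g‖ ‖x' - x‖` via Young's
inequality with exponents `p` and `p/(p-1)` together with the step-size restriction on `t`.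
-/

open Filter Topology Set Real

section Bregman

variable {X : Type*} [NormedAddCommGroup X] [NormedSpace ℝ X]

def bregmanDist (θ : X → ℝ) (ξ : X →L[ℝ] ℝ) (u v : X) : ℝ :=
  θ u - θ v - ξ (u - v)

theorem bregmanDist_sub_smul (θ : X → ℝ) (ξ g : X →L[ℝ] ℝ) (t : ℝ) (u v w : X) :
    bregmanDist θ (ξ - t • g) u w
      = bregmanDist θ ξ u v - bregmanDist θ ξ w v + t * g (u - v) + t * g (v - w) := by
  have hξ : ξ (u - w) = ξ (u - v) - ξ (w - v) := by rw [← map_sub]; congr 1; abel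
  have hg : g (u - w) = g (u - v) + g (v - w) := by rw [← map_add]; congr 1; abel
  simp only [bregmanDist, sub_apply, smul_apply, smul_eq_mul, hξ, hg]
  ring

theorem uniformConvexOn_univ_of_pconvex {θ : X → ℝ} {σ p : ℝ}
    (hθ : ∀ u v : X, ∀ s : ℝ, s ∈ Icc (0:ℝ) 1 →
      θ (s • u + (1 - s) • v) + σ * s * (1 - s) * ‖u - v‖ ^ p ≤ s * θ u + (1 - s) * θ v) :
    UniformConvexOn univ (fun r => σ * r ^ p) θ := by
  refine ⟨convex_univ, fun u _ v _ a b ha hb hab => ?_⟩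
  obtain rfl : b = 1 - a := by linarith
  have := hθ u v a ⟨ha, by linarith⟩
  simp only [smul_eq_mul]
  linarith

theorem UniformConvexOn.le_bregmanDist {θ : X → ℝ} {φ : ℝ → ℝ}
    (hθ : UniformConvexOn univ φ θ) {ξ : X →L[ℝ] ℝ} {v : X} (hξ : ∀ z, θ v + ξ (z - v) ≤ θ z)
    (u : X) : φ ‖u - v‖ ≤ bregmanDist θ ξ u v := by
  have hseg : ∀ s ∈ Ioo (0:ℝ) 1, (1 - s) * φ ‖u - v‖ ≤ bregmanDist θ ξ u v := by
    intro s ⟨hs0, hs1⟩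
    have hconv := hθ.2 (mem_univ u) (mem_univ v) hs0.le (by linarith : 0 ≤ 1 - s)
      (add_sub_cancel s 1)
    have hsub := hξ (s • u + (1 - s) • v)
    have hdir : s • u + (1 - s) • v - v = s • (u - v) := by
      rw [smul_sub, sub_smul, one_smul]; abel
    rw [hdir, map_smul, smul_eq_mul] at hsub
    simp only [smul_eq_mul] at hconv
    rw [← mul_le_mul_iff_right₀ hs0]
    unfold bregmanDist
    nlinarith
  have hlim : Tendsto (fun s : ℝ => (1 - s) * φ ‖u - v‖) (𝓝[>] 0) (𝓝 ((1 - 0) * φ ‖u - v‖)) :=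
    ((continuous_const.sub continuous_id).mul continuous_const).tendsto 0 |>.mono_left
      nhdsWithin_le_nhds
  rw [sub_zero, one_mul] at hlim
  exact le_of_tendsto hlim (eventually_of_mem (Ioo_mem_nhdsGT one_pos) hseg)

end Bregman

theorem inner_le_of_tangential_cone {Y : Type*} [NormedAddCommGroup Y] [InnerProductSpace ℝ Y]
    {a b w yδ : Y} {η δ τ : ℝ} (hη : 0 ≤ η) (hτ : 0 < τ)
    (hcone : ‖b - a - w‖ ≤ η * ‖b - a‖) (hnoise : ‖yδ - b‖ ≤ δ) (hdisc : τ * δ ≤ ‖a - yδ‖) :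
    inner ℝ (a - yδ) w ≤ -((1 - η - (1 + η) / τ) * ‖a - yδ‖ ^ 2) := by
  have hba : ‖b - a‖ ≤ ‖a - yδ‖ + δ :=
    calc ‖b - a‖ ≤ ‖b - yδ‖ + ‖yδ - a‖ := norm_sub_le_norm_sub_add_norm_sub _ _ _
      _ ≤ ‖a - yδ‖ + δ := by rw [norm_sub_rev b yδ, norm_sub_rev yδ a]; linarith
  set r := a - yδ
  have hδ : ‖r‖ * δ ≤ ‖r‖ ^ 2 / τ := by
    rw [le_div_iff₀ hτ]; nlinarith [norm_nonneg r]
  have hsplit : w = -r + (b - yδ) - (b - a - w) := by simp only [r]; abel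
  have hdata : inner ℝ r (b - yδ) ≤ ‖r‖ * δ :=
    (real_inner_le_norm _ _).trans
      (mul_le_mul_of_nonneg_left (by rwa [norm_sub_rev]) (norm_nonneg r))
  have hlin : -inner ℝ r (b - a - w) ≤ ‖r‖ * (η * (‖r‖ + δ)) := by
    rw [← inner_neg_right]
    exact (real_inner_le_norm _ _).trans (mul_le_mul_of_nonneg_left
      (by rw [norm_neg]; exact hcone.trans (mul_le_mul_of_nonneg_left hba hη)) (norm_nonneg r))
  rw [hsplit, inner_sub_right, inner_add_right, inner_neg_right, real_inner_self_eq_norm_sq]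
  have hδη : (1 + η) * (‖r‖ * δ) ≤ (1 + η) * (‖r‖ ^ 2 / τ) := by gcongr
  have hexp : -((1 - η - (1 + η) / τ) * ‖r‖ ^ 2)
      = -‖r‖ ^ 2 + η * ‖r‖ ^ 2 + (1 + η) * (‖r‖ ^ 2 / τ) := by ring
  rw [hexp]
  linarith

theorem young_inequality_of_nonneg_scaled {p q σ a b : ℝ} (hpq : p.HolderConjugate q)
    (hσ : 0 < σ) (ha : 0 ≤ a) (hb : 0 ≤ b) :
    a * b ≤ σ * a ^ p + b ^ q / (q * (p * σ) ^ (q / p)) := by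
  have hpσ : 0 < p * σ := mul_pos hpq.pos hσ
  set c := (p * σ) ^ (1 / p)
  have hc : 0 < c := rpow_pos_of_pos hpσ _
  have hcp : c ^ p = p * σ := by
    rw [← rpow_mul hpσ.le, one_div_mul_cancel hpq.ne_zero, rpow_one]
  have hcq : c ^ q = (p * σ) ^ (q / p) := by rw [← rpow_mul hpσ.le, one_div_mul_eq_div]
  calc a * b = (c * a) * (b / c) := by field_simp
    _ ≤ (c * a) ^ p / p + (b / c) ^ q / q :=
      young_inequality_of_nonneg (by positivity) (by positivity) hpq
    _ = σ * a ^ p + b ^ q / (q * (p * σ) ^ (q / p)) := by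
      rw [mul_rpow hc.le ha, div_rpow hb hc.le, hcp, hcq]
      field_simp [hpq.ne_zero]

theorem mul_rpow_conjExponent_le {p t G M R : ℝ} (hp : 1 < p) (ht : 0 ≤ t) (hG : 0 ≤ G)
    (hM : 0 ≤ M) (hR : 0 ≤ R) (h : t * G ^ p ≤ M * R ^ (2 * (p - 1))) :
    (t * G) ^ (p / (p - 1)) ≤ t * M ^ (1 / (p - 1)) * R ^ 2 := by
  have hp1 : 0 < p - 1 := by linarith
  have htp : (t * G) ^ p = t ^ (p - 1) * (t * G ^ p) := by
    rw [mul_rpow ht hG, ← mul_assoc, ← rpow_add_one' ht (by linarith), sub_add_cancel]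
  calc (t * G) ^ (p / (p - 1)) = ((t * G) ^ p) ^ (1 / (p - 1)) := by
        rw [← rpow_mul (by positivity), mul_one_div]
    _ ≤ (t ^ (p - 1) * (M * R ^ (2 * (p - 1)))) ^ (1 / (p - 1)) := by
        rw [htp]; gcongr
    _ = t * M ^ (1 / (p - 1)) * R ^ 2 := by
        rw [mul_rpow (by positivity) (by positivity), mul_rpow hM (by positivity),
          ← rpow_mul ht, ← rpow_mul hR, mul_one_div_cancel hp1.ne', rpow_one,
          mul_assoc 2, mul_one_div_cancel hp1.ne', mul_one, rpow_two, mul_assoc]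

theorem mul_mul_le_of_step_le {p σ μ t G R a : ℝ} (hp : 2 ≤ p) (hσ : 0 < σ) (hμ : 0 < μ)
    (ht : 0 ≤ t) (hG : 0 ≤ G) (hR : 0 ≤ R) (ha : 0 ≤ a)
    (hstep : t * G ^ p ≤ μ * R ^ (2 * (p - 1))) :
    t * G * a ≤ σ * a ^ p + (p - 1) / p * (μ / (2 * σ)) ^ (1 / (p - 1)) * (t * R ^ 2) := by
  have hp1 : 1 < p := by linarith
  have hpq : p.HolderConjugate (p / (p - 1)) := HolderConjugate.conjExponent hp1
  have hqp : p / (p - 1) / p = 1 / (p - 1) := by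
    rw [div_div, mul_comm, ← div_div, div_self (by linarith), one_div]
  calc t * G * a = a * (t * G) := mul_comm _ _
    _ ≤ σ * a ^ p + (t * G) ^ (p / (p - 1)) / ((p / (p - 1)) * (p * σ) ^ (1 / (p - 1))) := by
        simpa only [hqp] using young_inequality_of_nonneg_scaled hpq hσ ha (by positivity)
    _ ≤ σ * a ^ p + t * μ ^ (1 / (p - 1)) * R ^ 2 / ((p / (p - 1)) * (p * σ) ^ (1 / (p - 1))) := by
        have : 0 < p / (p - 1) := hpq.symm.pos
        gcongr
        exact mul_rpow_conjExponent_le hp1 ht hG hμ.le hR hstep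
    _ = σ * a ^ p + (p - 1) / p * (μ / (p * σ)) ^ (1 / (p - 1)) * (t * R ^ 2) := by
        rw [div_rpow hμ.le (by positivity)]
        field_simp
    _ ≤ σ * a ^ p + (p - 1) / p * (μ / (2 * σ)) ^ (1 / (p - 1)) * (t * R ^ 2) := by
        gcongr

theorem sgd_one_step_descent_pconvex_general
    {X : Type*} [NormedAddCommGroup X] [NormedSpace ℝ X]
    {Y : Type*} [NormedAddCommGroup Y] [InnerProductSpace ℝ Y]
    (p σ : ℝ) (hp : 2 ≤ p) (hσ : 0 < σ) (θ : X → ℝ)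
    (hθ : ∀ u v : X, ∀ s : ℝ, s ∈ Set.Icc (0:ℝ) 1 →
      θ (s • u + (1 - s) • v) + σ * s * (1 - s) * ‖u - v‖ ^ p
        ≤ s * θ u + (1 - s) * θ v)
    (x0 : X) (ρ : ℝ)
    (F : X → Y) (F' : X → (X →L[ℝ] Y))
    (η : ℝ) (hη0 : 0 ≤ η)
    (hTCC : ∀ u ∈ Metric.closedBall x0 (2 * ρ), ∀ v ∈ Metric.closedBall x0 (2 * ρ),
      ‖F u - F v - F' v (u - v)‖ ≤ η * ‖F u - F v‖)
    (xhat : X) (hxhat : xhat ∈ Metric.closedBall x0 (2 * ρ))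
    (y : Y) (hsol : F xhat = y)
    (yδ : Y) (δ : ℝ) (hnoise : ‖yδ - y‖ ≤ δ)
    (τ μ0 : ℝ) (hτ : 1 < τ) (hμ0 : 0 < μ0)
    (x : X) (hx : x ∈ Metric.closedBall x0 (2 * ρ))
    (ξ : X →L[ℝ] ℝ) (hξ : ∀ z : X, θ x + ξ (z - x) ≤ θ z)
    (hdisc : τ * δ ≤ ‖F x - yδ‖)
    (g : X →L[ℝ] ℝ) (hg : ∀ v : X, g v = (inner ℝ (F x - yδ) (F' x v) : ℝ))
    (t : ℝ) (ht0 : 0 ≤ t)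
    (ht : t * ‖g‖ ^ p ≤ μ0 * ‖F x - yδ‖ ^ (2 * (p - 1)))
    (ξ' : X →L[ℝ] ℝ) (hξ' : ξ' = ξ - t • g)
    (x' : X)
    (c0 : ℝ)
    (hc0 : c0 = 1 - η - (1 + η) / τ - ((p - 1) / p) * (μ0 / (2 * σ)) ^ (1 / (p - 1))) :
    θ xhat - θ x' - ξ' (xhat - x')
      ≤ θ xhat - θ x - ξ (xhat - x) - c0 * t * ‖F x - yδ‖ ^ 2 := by
  have hconv : σ * ‖x' - x‖ ^ p ≤ bregmanDist θ ξ x' x :=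
    (uniformConvexOn_univ_of_pconvex hθ).le_bregmanDist hξ x'
  have hcone : t * g (xhat - x) ≤ t * -((1 - η - (1 + η) / τ) * ‖F x - yδ‖ ^ 2) := by
    rw [hg]
    exact mul_le_mul_of_nonneg_left (inner_le_of_tangential_cone hη0 (by linarith)
      (hTCC xhat hxhat x hx) (by rwa [hsol]) hdisc) ht0
  have hyoung : t * g (x - x') ≤ σ * ‖x' - x‖ ^ p
      + (p - 1) / p * (μ0 / (2 * σ)) ^ (1 / (p - 1)) * (t * ‖F x - yδ‖ ^ 2) :=
    calc t * g (x - x') ≤ t * ‖g‖ * ‖x' - x‖ := by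
          rw [mul_assoc, norm_sub_rev x' x]
          exact mul_le_mul_of_nonneg_left ((Real.le_norm_self _).trans (g.le_opNorm _)) ht0
      _ ≤ _ := mul_mul_le_of_step_le hp hσ hμ0 ht0 (norm_nonneg g)
        (norm_nonneg _) (norm_nonneg _) ht
  change bregmanDist θ ξ' xhat x' ≤ bregmanDist θ ξ xhat x - _
  rw [hξ', bregmanDist_sub_smul θ ξ g t xhat x x', hc0]
  linarith

/-- One-step descent estimate for the SGD-θ update (Hilbert data, general
`p`-convex penalty):  under the tangential cone condition with constant `η ∈ [0,1)`, if
`xhat ∈ B_{2ρ}(x0)` solves `F(xhat) = y`, `‖yδ − y‖ ≤ δ`, `x ∈ B_{2ρ}(x0)`, `ξ ∈ ∂θ(x)`,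
`‖F(x) − yδ‖ ≥ τ δ`, `g = F'(x)*(F(x) − yδ)`, `t ≥ 0` with `t ‖g‖^p ≤ μ0 ‖F(x) − yδ‖^{2(p−1)}`,
`ξ' = ξ − t g` and `x'` minimizes `z ↦ θ(z) − ⟨ξ', z⟩`, then
`D_{ξ'}θ(xhat, x') ≤ D_ξθ(xhat, x) − c0 t ‖F(x) − yδ‖²` with
`c0 = 1 − η − (1+η)/τ − ((p−1)/p)(μ0/(2σ))^{1/(p−1)}`. -/
theorem sgd_one_step_descent_pconvex
    {X : Type*} [NormedAddCommGroup X] [NormedSpace ℝ X] [CompleteSpace X]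
    {Y : Type*} [NormedAddCommGroup Y] [InnerProductSpace ℝ Y] [CompleteSpace Y]
    (p σ : ℝ) (hp : 2 ≤ p) (hσ : 0 < σ) (θ : X → ℝ)
    (hθ : ∀ u v : X, ∀ s : ℝ, s ∈ Set.Icc (0:ℝ) 1 →
      θ (s • u + (1 - s) • v) + σ * s * (1 - s) * ‖u - v‖ ^ p
        ≤ s * θ u + (1 - s) * θ v)
    (x0 : X) (ρ : ℝ) (hρ : 0 < ρ)
    (F : X → Y) (F' : X → (X →L[ℝ] Y))
    (hF : ∀ z ∈ Metric.closedBall x0 (2 * ρ), HasFDerivAt F (F' z) z)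
    (η : ℝ) (hη0 : 0 ≤ η) (hη1 : η < 1)
    (hTCC : ∀ u ∈ Metric.closedBall x0 (2 * ρ), ∀ v ∈ Metric.closedBall x0 (2 * ρ),
      ‖F u - F v - F' v (u - v)‖ ≤ η * ‖F u - F v‖)
    (xhat : X) (hxhat : xhat ∈ Metric.closedBall x0 (2 * ρ))
    (y : Y) (hsol : F xhat = y)
    (yδ : Y) (δ : ℝ) (hnoise : ‖yδ - y‖ ≤ δ)
    (τ μ0 : ℝ) (hτ : 1 < τ) (hμ0 : 0 < μ0)
    (x : X) (hx : x ∈ Metric.closedBall x0 (2 * ρ))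
    (ξ : X →L[ℝ] ℝ) (hξ : ∀ z : X, θ x + ξ (z - x) ≤ θ z)
    (hdisc : τ * δ ≤ ‖F x - yδ‖)
    (g : X →L[ℝ] ℝ) (hg : ∀ v : X, g v = (inner ℝ (F x - yδ) (F' x v) : ℝ))
    (t : ℝ) (ht0 : 0 ≤ t)
    (ht : t * ‖g‖ ^ p ≤ μ0 * ‖F x - yδ‖ ^ (2 * (p - 1)))
    (ξ' : X →L[ℝ] ℝ) (hξ' : ξ' = ξ - t • g)
    (x' : X) (hx' : ∀ z : X, θ x' - ξ' x' ≤ θ z - ξ' z)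
    (c0 : ℝ)
    (hc0 : c0 = 1 - η - (1 + η) / τ - ((p - 1) / p) * (μ0 / (2 * σ)) ^ (1 / (p - 1))) :
    θ xhat - θ x' - ξ' (xhat - x')
      ≤ θ xhat - θ x - ξ (xhat - x) - c0 * t * ‖F x - yδ‖ ^ 2 :=
  sgd_one_step_descent_pconvex_general p σ hp hσ θ hθ x0 ρ F F' η hη0 hTCC xhat hxhat y hsol yδ δ
    hnoise τ μ0 hτ hμ0 x hx ξ hξ hdisc g hg t ht0 ht ξ' hξ' x' c0 hc0
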